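/- In ℝ² with coordinates (x,y), let 𝔓 = ⟨∂/∂x, ∂/∂y, E, x∂/∂y⟩_ℝ where E = x∂/∂x + y∂/∂y. The linear map f defined by f(∂/∂x) = ∂/∂x + ∂/∂y, f(∂/∂y) = ∂/∂y, f(E) = E + x∂/∂y, f(x∂/∂y) = x∂/∂y belongs to the centroid C(𝔓), and f is not a real scalar multiple of the identity. Hence C(𝔓) strictly contains ℝ·Id. -/
import Mathlib


open MvPolynomial

/-- Polynomial vector fields on ℝⁿ, given by their polynomial components. -/
abbrev PVF (n : ℕ) : Type := Fin n → MvPolynomial (Fin n) ℝ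

/-- The Lie bracket of polynomial vector fields:
`[X,Y]^j = Σ_i (X^i ∂(Y^j)/∂x^i − Y^i ∂(X^j)/∂x^i)`. -/
noncomputable def vbracket {n : ℕ} (X Y : PVF n) : PVF n :=
  fun j => ∑ i : Fin n, (X i * pderiv i (Y j) - Y i * pderiv i (X j))

/-- The Euler vector field `E = Σ_i x^i ∂/∂x^i`. -/
noncomputable def eulerVF (n : ℕ) : PVF n := fun j => MvPolynomial.X j

/-- The constant vector field `∂/∂x^i`. -/
noncomputable def constVF {n : ℕ} (i : Fin n) : PVF n := fun j => if j = i then 1 else 0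

/-- A polynomial vector field is homogeneous of degree `i` (an element of `𝔥_i`)
if all its components are homogeneous polynomials of degree `i+1` (the zero field
is homogeneous of every degree). -/
def IsHomog {n : ℕ} (i : ℤ) (X : PVF n) : Prop :=
  (∃ d : ℕ, (d : ℤ) = i + 1 ∧ ∀ k, (X k).IsHomogeneous d) ∨ X = 0

/-- The vector field x∂/∂y on ℝ². -/
noncomputable def xddy : PVF 2 := fun j => if j = 1 then MvPolynomial.X 0 else 0

/-- The span of ∂/∂x, ∂/∂y, E, x∂/∂y on ℝ². -/
noncomputable def Pex : Submodule ℝ (PVF 2) :=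
  Submodule.span ℝ {constVF 0, constVF 1, eulerVF 2, xddy}

lemma vbr_add_left {n} (X X' Y : PVF n) : vbracket (X + X') Y = vbracket X Y + vbracket X' Y := by
  funext j
  simp only [vbracket, Pi.add_apply, map_add, ← Finset.sum_add_distrib]
  exact Finset.sum_congr rfl fun i _ => by ring

lemma vbr_add_right {n} (X Y Y' : PVF n) : vbracket X (Y + Y') = vbracket X Y + vbracket X Y' := by
  funext j
  simp only [vbracket, Pi.add_apply, map_add, ← Finset.sum_add_distrib]
  exact Finset.sum_congr rfl fun i _ => by ring

lemma vbr_smul_left {n} (c : ℝ) (X Y : PVF n) : vbracket (c • X) Y = c • vbracket X Y := by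
  funext j
  simp only [vbracket, Pi.smul_apply, map_smul, Finset.smul_sum]
  exact Finset.sum_congr rfl fun i _ => by
    simp [smul_sub, smul_mul_assoc, mul_smul_comm]

lemma vbr_smul_right {n} (c : ℝ) (X Y : PVF n) : vbracket X (c • Y) = c • vbracket X Y := by
  funext j
  simp only [vbracket, Pi.smul_apply, map_smul, Finset.smul_sum]
  exact Finset.sum_congr rfl fun i _ => by
    simp [smul_sub, smul_mul_assoc, mul_smul_comm]

lemma vbr_zero_left {n} (Y : PVF n) : vbracket 0 Y = 0 := by
  funext j; simp [vbracket]

lemma vbr_zero_right {n} (X : PVF n) : vbracket X 0 = 0 := by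
  funext j; simp [vbracket]

lemma B11 : vbracket (constVF (0:Fin 2)) (constVF 0) = 0 := by
  funext j; fin_cases j <;> simp [vbracket, constVF, Fin.sum_univ_two]
lemma B12 : vbracket (constVF (0:Fin 2)) (constVF 1) = 0 := by
  funext j; fin_cases j <;> simp [vbracket, constVF, Fin.sum_univ_two]
lemma B13 : vbracket (constVF 0) (eulerVF 2) = constVF 0 := by
  funext j; fin_cases j <;> simp [vbracket, constVF, eulerVF, Fin.sum_univ_two]
lemma B14 : vbracket (constVF 0) xddy = constVF 1 := by
  funext j; fin_cases j <;> simp [vbracket, constVF, xddy, Fin.sum_univ_two]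
lemma B21 : vbracket (constVF (1:Fin 2)) (constVF 0) = 0 := by
  funext j; fin_cases j <;> simp [vbracket, constVF, Fin.sum_univ_two]
lemma B22 : vbracket (constVF (1:Fin 2)) (constVF 1) = 0 := by
  funext j; fin_cases j <;> simp [vbracket, constVF, Fin.sum_univ_two]
lemma B23 : vbracket (constVF 1) (eulerVF 2) = constVF 1 := by
  funext j; fin_cases j <;> simp [vbracket, constVF, eulerVF, Fin.sum_univ_two]
lemma B24 : vbracket (constVF 1) xddy = 0 := by
  funext j; fin_cases j <;> simp [vbracket, constVF, xddy, Fin.sum_univ_two]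
lemma B31 : vbracket (eulerVF 2) (constVF 0) = -constVF 0 := by
  funext j; fin_cases j <;> simp [vbracket, constVF, eulerVF, Fin.sum_univ_two]
lemma B32 : vbracket (eulerVF 2) (constVF 1) = -constVF 1 := by
  funext j; fin_cases j <;> simp [vbracket, constVF, eulerVF, Fin.sum_univ_two]
lemma B33 : vbracket (eulerVF 2) (eulerVF 2) = 0 := by
  funext j; fin_cases j <;> simp [vbracket, eulerVF, Fin.sum_univ_two]
lemma B34 : vbracket (eulerVF 2) xddy = 0 := by
  funext j; fin_cases j <;> simp [vbracket, eulerVF, xddy, Fin.sum_univ_two]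
lemma B41 : vbracket xddy (constVF 0) = -constVF 1 := by
  funext j; fin_cases j <;> simp [vbracket, constVF, xddy, Fin.sum_univ_two]
lemma B42 : vbracket xddy (constVF 1) = 0 := by
  funext j; fin_cases j <;> simp [vbracket, constVF, xddy, Fin.sum_univ_two]
lemma B43 : vbracket xddy (eulerVF 2) = 0 := by
  funext j; fin_cases j <;> simp [vbracket, eulerVF, xddy, Fin.sum_univ_two]
lemma B44 : vbracket xddy xddy = 0 := by
  funext j; fin_cases j <;> simp [vbracket, xddy, Fin.sum_univ_two]

theorem centroid_strictly_larger_than_scalars (f : PVF 2 →ₗ[ℝ] PVF 2)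
    (h1 : f (constVF 0) = constVF 0 + constVF 1)
    (h2 : f (constVF 1) = constVF 1)
    (h3 : f (eulerVF 2) = eulerVF 2 + xddy)
    (h4 : f xddy = xddy) :
    (∀ X ∈ Pex, ∀ Y ∈ Pex,
      f (vbracket X Y) = vbracket (f X) Y ∧ f (vbracket X Y) = vbracket X (f Y)) ∧
    ¬ (∃ c : ℝ, ∀ X ∈ Pex, f X = c • X) := by
  constructor
  · have gens : ∀ x ∈ ({constVF 0, constVF 1, eulerVF 2, xddy} : Set (PVF 2)),
        ∀ y ∈ ({constVF 0, constVF 1, eulerVF 2, xddy} : Set (PVF 2)),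
        f (vbracket x y) = vbracket (f x) y ∧ f (vbracket x y) = vbracket x (f y) := by
      intro x hx y hy
      simp only [Set.mem_insert_iff, Set.mem_singleton_iff] at hx hy
      rcases hx with rfl|rfl|rfl|rfl <;> rcases hy with rfl|rfl|rfl|rfl <;>
        refine ⟨?_, ?_⟩ <;>
        simp [h1, h2, h3, h4, B11, B12, B13, B14, B21, B22, B23, B24,
          B31, B32, B33, B34, B41, B42, B43, B44,
          vbr_add_left, vbr_add_right, neg_add, map_add, map_neg, add_comm]
    intro X hX
    refine Submodule.span_induction
      (p := fun X _ => ∀ Y ∈ Pex,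
        f (vbracket X Y) = vbracket (f X) Y ∧ f (vbracket X Y) = vbracket X (f Y))
      ?_ ?_ ?_ ?_ hX
    · intro x hx Y hY
      refine Submodule.span_induction
        (p := fun Y _ =>
          f (vbracket x Y) = vbracket (f x) Y ∧ f (vbracket x Y) = vbracket x (f Y))
        ?_ ?_ ?_ ?_ hY
      · intro y hy; exact gens x hx y hy
      · simp [vbr_zero_right]
      · intro y z _ _ hy hz
        exact ⟨by simp only [vbr_add_right, map_add, hy.1, hz.1],
               by simp only [vbr_add_right, map_add, hy.2, hz.2]⟩
      · intro a y _ hy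
        exact ⟨by simp only [vbr_smul_right, map_smul, hy.1],
               by simp only [vbr_smul_right, map_smul, hy.2]⟩
    · intro Y hY; simp [vbr_zero_left]
    · intro x y _ _ hx hy Y hY
      exact ⟨by simp only [vbr_add_left, map_add, (hx Y hY).1, (hy Y hY).1],
             by simp only [vbr_add_left, map_add, (hx Y hY).2, (hy Y hY).2]⟩
    · intro a x _ hx Y hY
      exact ⟨by simp only [vbr_smul_left, map_smul, (hx Y hY).1],
             by simp only [vbr_smul_left, map_smul, (hx Y hY).2]⟩
  · rintro ⟨c, hc⟩
    have hmem : constVF 0 ∈ Pex := Submodule.subset_span (by simp)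
    have := hc (constVF 0) hmem
    rw [h1] at this
    have h1' := congrFun this 1
    simp [constVF, Pi.smul_apply] at h1'
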